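/- Sharp 3×3 Lemma: In an abelian category, consider a commutative diagram with three rows 0 → A' → B' → C', 0 → A → B → C → 0, 0 → A'' → B'' → C'' and three columns 0 → A' → A → A'' → 0, 0 → B' → B → B'', 0 → C' → C → C''. Assume: the first column is exact at A', A and A'' (so A → A'' is an epimorphism), the second column is exact at B' and B, the third column is exact at C' and C; the second row is exact at A, B and C (so B → C is an epimorphism); and the third row is exact at A'' and B''. Then the first row, extended by 0 on the right, is exact: 0 → A' → B' → C' → 0 is exact at A', B' and C' (in particular B' → C' is an epimorphism). -/
import Mathlib


open CategoryTheory CategoryTheory.Limits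

namespace Salamander

/-- A two-term sequence `f, g` is exact at its middle object. -/
def ExactAt {C : Type*} [Category C] [HasZeroMorphisms C] {X Y Z : C}
    (f : X ⟶ Y) (g : Y ⟶ Z) : Prop :=
  ∃ w : f ≫ g = 0, (ShortComplex.mk f g w).Exact

open CategoryTheory.Abelian CategoryTheory.Abelian.Pseudoelement

attribute [local instance] Pseudoelement.objectToSort Pseudoelement.homToFun

/-- **The Sharp 3×3 Lemma.**  Given a commutative diagram in an abelian category with
rows `0 ⟶ A' ⟶ B' ⟶ C'`, `0 ⟶ A ⟶ B ⟶ C ⟶ 0`, `0 ⟶ A'' ⟶ B'' ⟶ C''` and columns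
`0 ⟶ A' ⟶ A ⟶ A'' ⟶ 0`, `0 ⟶ B' ⟶ B ⟶ B''`, `0 ⟶ C' ⟶ C ⟶ C''`, where the first
column is exact at `A'`, `A`, `A''`, the second column exact at `B'`, `B`, the third
column exact at `C'`, `C`, the middle row exact at `A`, `B`, `C`, and the third row
exact at `A''`, `B''`, then the first row, extended by zero on the right, is exact:
`0 ⟶ A' ⟶ B' ⟶ C' ⟶ 0` is exact at `A'`, `B'` and `C'`. -/
theorem sharp_three_by_three {CAT : Type*} [Category CAT] [Abelian CAT]
    {A' B' C' A B C A'' B'' C'' : CAT}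
    (f' : A' ⟶ B') (g' : B' ⟶ C')
    (f : A ⟶ B) (g : B ⟶ C)
    (f'' : A'' ⟶ B'') (g'' : B'' ⟶ C'')
    (a₁ : A' ⟶ A) (a₂ : A ⟶ A'')
    (b₁ : B' ⟶ B) (b₂ : B ⟶ B'')
    (c₁ : C' ⟶ C) (c₂ : C ⟶ C'')
    (sq₁ : f' ≫ b₁ = a₁ ≫ f) (sq₂ : g' ≫ c₁ = b₁ ≫ g)
    (sq₃ : f ≫ b₂ = a₂ ≫ f'') (sq₄ : g ≫ c₂ = b₂ ≫ g'')
    (colA₁ : Mono a₁) (colA₂ : ExactAt a₁ a₂) (colA₃ : Epi a₂)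
    (colB₁ : Mono b₁) (colB₂ : ExactAt b₁ b₂)
    (colC₁ : Mono c₁) (colC₂ : ExactAt c₁ c₂)
    (row₂A : Mono f) (row₂B : ExactAt f g) (row₂C : Epi g)
    (row₃A : Mono f'') (row₃B : ExactAt f'' g'') :
    Mono f' ∧ ExactAt f' g' ∧ Epi g' := by
  obtain ⟨wA, hA⟩ := colA₂
  obtain ⟨wB, hB⟩ := colB₂
  obtain ⟨wC, hC⟩ := colC₂
  obtain ⟨w₂, h₂⟩ := row₂B
  obtain ⟨w₃, h₃⟩ := row₃B
  -- pseudoelement exactness of the relevant sequences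
  have pA : ∀ x, a₂ x = 0 → ∃ y, a₁ y = x := Pseudoelement.pseudo_exact_of_exact hA
  have pB : ∀ x, b₂ x = 0 → ∃ y, b₁ y = x := Pseudoelement.pseudo_exact_of_exact hB
  have p₂ : ∀ x, g x = 0 → ∃ y, f y = x := Pseudoelement.pseudo_exact_of_exact h₂
  have p₃ : ∀ x, g'' x = 0 → ∃ y, f'' y = x := Pseudoelement.pseudo_exact_of_exact h₃
  -- Mono f'
  have monof' : Mono f' := by
    have : Mono (f' ≫ b₁) := by rw [sq₁]; exact mono_comp _ _
    exact mono_of_mono f' b₁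
  refine ⟨monof', ?_, ?_⟩
  · -- Exactness at B'
    have w : f' ≫ g' = 0 := by
      have : (f' ≫ g') ≫ c₁ = 0 := by
        rw [Category.assoc, sq₂, ← Category.assoc, sq₁, Category.assoc, w₂,
          comp_zero]
      rwa [← cancel_mono c₁, zero_comp]
    refine ⟨w, Pseudoelement.exact_of_pseudo_exact _ ?_⟩
    intro x hx
    -- g (b₁ x) = 0
    have h1 : g (b₁ x) = 0 := by
      rw [← Pseudoelement.comp_apply, ← sq₂, Pseudoelement.comp_apply, hx,
        Pseudoelement.apply_zero]
    obtain ⟨a, ha⟩ := p₂ _ h1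
    have h2 : f'' (a₂ a) = 0 := by
      rw [← Pseudoelement.comp_apply, ← sq₃, Pseudoelement.comp_apply, ha,
        ← Pseudoelement.comp_apply, wB, Pseudoelement.zero_apply]
    have h3 : a₂ a = 0 := Pseudoelement.zero_of_map_zero f''
      (Pseudoelement.pseudo_injective_of_mono f'') _ h2
    obtain ⟨a', ha'⟩ := pA _ h3
    refine ⟨a', Pseudoelement.pseudo_injective_of_mono b₁ ?_⟩
    show b₁ (f' a') = b₁ x
    rw [← Pseudoelement.comp_apply, sq₁, Pseudoelement.comp_apply, ha', ha]
  · -- Epi g'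
    apply Pseudoelement.epi_of_pseudo_surjective
    intro c'
    obtain ⟨b, hb⟩ := Pseudoelement.pseudo_surjective_of_epi g (c₁ c')
    have h1 : g'' (b₂ b) = 0 := by
      rw [← Pseudoelement.comp_apply, ← sq₄, Pseudoelement.comp_apply, hb,
        ← Pseudoelement.comp_apply, wC, Pseudoelement.zero_apply]
    obtain ⟨a'', ha''⟩ := p₃ _ h1
    obtain ⟨a, ha⟩ := Pseudoelement.pseudo_surjective_of_epi a₂ a''
    have h2 : b₂ (f a) = b₂ b := by
      rw [← Pseudoelement.comp_apply, sq₃, Pseudoelement.comp_apply, ha, ha'']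
    obtain ⟨z, hz0, hz⟩ := Pseudoelement.sub_of_eq_image b₂ b (f a) h2.symm
    have hfa : g (f a) = 0 := by
      rw [← Pseudoelement.comp_apply, w₂, Pseudoelement.zero_apply]
    have hgz : g z = c₁ c' := by rw [hz _ g hfa, hb]
    obtain ⟨b', hb'⟩ := pB _ hz0
    refine ⟨b', Pseudoelement.pseudo_injective_of_mono c₁ ?_⟩
    show c₁ (g' b') = c₁ c'
    rw [← Pseudoelement.comp_apply, sq₂, Pseudoelement.comp_apply, hb', hgz]

end Salamander
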